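/- arXiv:1903.06444 — 5 statements merged into one kernel-verified Lean document; each statement's English description precedes it below -/
import Mathlib

section
/- Let A, E ∈ ℝ^{n×n} with E = Eᵀ positive definite, A = Aᵀ negative definite, and EA = AE, and let B ∈ ℝ^{n×m}. Set P := -A^{-1}E^{-1}. Then P is symmetric positive definite and (A + B Bᵀ A^{-1})ᵀ P E + E P (A + B Bᵀ A^{-1}) = -2I - 2 A^{-1} B Bᵀ A^{-1}, which is negative definite. -/
/-!
Since `E` and `A` commute, `P = (-A * E)⁻¹` is the inverse of a product of commuting positive
definite matrices, hence positive definite. Moreover `P * E = E * P = -A⁻¹`, so the Lyapunov sum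
collapses to `Fᵀ (-A⁻¹) + (-A⁻¹) F` with `F = A + B Bᵀ A⁻¹`, which is
`-2 (1 + (A⁻¹ B) (A⁻¹ B)ᵀ)` because `A` and `B Bᵀ` are symmetric.
-/

open Matrix

open scoped ComplexOrder MatrixOrder Matrix.Norms.L2Operator in
theorem Matrix.PosDef.mul_of_commute {𝕜 ι : Type*} [RCLike 𝕜] [Fintype ι] [DecidableEq ι]
    {M N : Matrix ι ι 𝕜} (hM : M.PosDef) (hN : N.PosDef) (h : Commute M N) :
    (M * N).PosDef :=
  ((hM.isStrictlyPositive.commute_iff hN.isStrictlyPositive).mp h).posDef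

theorem Matrix.transpose_add_mul_inv_mul_neg_inv_add_neg_inv_mul {ι R : Type*} [Fintype ι]
    [DecidableEq ι] [CommRing R] {A S : Matrix ι ι R}
    (hA : IsUnit A.det) (hAT : Aᵀ = A) (hST : Sᵀ = S) :
    (A + S * A⁻¹)ᵀ * -A⁻¹ + -A⁻¹ * (A + S * A⁻¹) = -(2 : R) • 1 - (2 : R) • (A⁻¹ * S * A⁻¹) := by
  rw [transpose_add, transpose_mul, transpose_nonsing_inv, hAT, hST]
  simp only [add_mul, mul_add, mul_neg, neg_mul, mul_nonsing_inv _ hA, nonsing_inv_mul _ hA,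
    ← mul_assoc]
  module

theorem lyapunov_identity_general {n m : ℕ}
    (A E : Matrix (Fin n) (Fin n) ℝ) (B : Matrix (Fin n) (Fin m) ℝ)
    (hE : E.PosDef) (hA : (-A).PosDef) (hcomm : E * A = A * E) :
    let P := -(A⁻¹ * E⁻¹)
    P.PosDef ∧
      (A + B * Bᵀ * A⁻¹)ᵀ * P * E + E * P * (A + B * Bᵀ * A⁻¹)
        = -(2 : ℝ) • (1 : Matrix (Fin n) (Fin n) ℝ) - (2 : ℝ) • (A⁻¹ * B * Bᵀ * A⁻¹) ∧
      (-((A + B * Bᵀ * A⁻¹)ᵀ * P * E + E * P * (A + B * Bᵀ * A⁻¹))).PosDef := by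
  intro P
  have hAT : Aᵀ = A := by simpa using hA.isHermitian.neg.eq
  have hAdet : IsUnit A.det := (isUnit_iff_isUnit_det A).mp (by simpa using hA.isUnit.neg)
  have hEdet : IsUnit E.det := (isUnit_iff_isUnit_det E).mp hE.isUnit
  have hP : P = -(E⁻¹ * A⁻¹) := by rw [← Matrix.mul_inv_rev, ← hcomm, Matrix.mul_inv_rev]
  have hPE : P * E = -A⁻¹ := by rw [neg_mul, nonsing_inv_mul_cancel_right _ _ hEdet]
  have hEP : E * P = -A⁻¹ := by rw [hP, mul_neg, ← mul_assoc, mul_nonsing_inv _ hEdet, one_mul]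
  have hid : (A + B * Bᵀ * A⁻¹)ᵀ * P * E + E * P * (A + B * Bᵀ * A⁻¹)
      = -(2 : ℝ) • (1 : Matrix (Fin n) (Fin n) ℝ) - (2 : ℝ) • (A⁻¹ * B * Bᵀ * A⁻¹) := by
    rw [mul_assoc, hPE, hEP, transpose_add_mul_inv_mul_neg_inv_add_neg_inv_mul hAdet hAT
      (by rw [transpose_mul, transpose_transpose]), Matrix.mul_assoc A⁻¹ B]
  refine ⟨?_, hid, ?_⟩
  · have hPinv : P * (-A * E) = 1 := by
      rw [hP, neg_mul, neg_mul, mul_neg, neg_neg, Matrix.mul_assoc,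
        nonsing_inv_mul_cancel_left _ _ hAdet, nonsing_inv_mul _ hEdet]
    rw [← inv_eq_left_inv hPinv]
    exact (hA.mul_of_commute hE (Commute.neg_left hcomm.symm)).inv
  · have hAinvT : A⁻¹ᵀ = A⁻¹ := by rw [transpose_nonsing_inv, hAT]
    have hsq : A⁻¹ * B * Bᵀ * A⁻¹ = A⁻¹ * B * (A⁻¹ * B)ᴴ := by
      rw [conjTranspose_eq_transpose_of_trivial, transpose_mul, hAinvT, Matrix.mul_assoc (A⁻¹ * B)]
    rw [hid, neg_sub, neg_smul, sub_neg_eq_add, add_comm, ← smul_add, hsq]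
    exact (PosDef.one.add_posSemidef (posSemidef_self_mul_conjTranspose _)).smul two_pos

theorem lyapunov_identity {n m : ℕ}
    (A E : Matrix (Fin n) (Fin n) ℝ) (B : Matrix (Fin n) (Fin m) ℝ)
    (hE : E.PosDef) (hA : (-A).PosDef) (hAsym : Aᵀ = A) (hcomm : E * A = A * E) :
    let P := -(A⁻¹ * E⁻¹)
    P.PosDef ∧
      (A + B * Bᵀ * A⁻¹)ᵀ * P * E + E * P * (A + B * Bᵀ * A⁻¹)
        = -(2 : ℝ) • (1 : Matrix (Fin n) (Fin n) ℝ) - (2 : ℝ) • (A⁻¹ * B * Bᵀ * A⁻¹) ∧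
      (-((A + B * Bᵀ * A⁻¹)ᵀ * P * E + E * P * (A + B * Bᵀ * A⁻¹))).PosDef :=
  lyapunov_identity_general A E B hE hA hcomm
end

section
/- Let A ∈ ℝ^{n×n} be symmetric negative definite and B ∈ ℝ^{n×m}. Then every eigenvalue of A + B Bᵀ A^{-1} has strictly negative real part (i.e., A + B Bᵀ A^{-1} is Hurwitz). -/
/-!
With `P = -A⁻¹ ≻ 0`, the matrix `M = A + B Bᵀ A⁻¹` satisfies the Lyapunov identity
`Mᵀ P + P M = -2 (1 + C Cᵀ)` with `C = A⁻¹ B`, whose right-hand side is negative definite.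
For an eigenpair `M v = μ v` the Lyapunov form evaluates to `2 Re μ · v* P v`, so `Re μ < 0`.
-/

open Matrix
open scoped ComplexOrder

namespace Matrix

variable {n : Type*} [Fintype n]

theorem exists_mulVec_eq_smul_of_mem_spectrum [DecidableEq n] {K : Type*} [Field K]
    {M : Matrix n n K} {μ : K} (hμ : μ ∈ spectrum K M) : ∃ v ≠ 0, M *ᵥ v = μ • v := by
  rw [← spectrum_toLin', ← Module.End.hasEigenvalue_iff_mem_spectrum] at hμ
  obtain ⟨v, hv⟩ := hμ.exists_hasEigenvector
  exact ⟨v, hv.2, by simpa using hv.apply_eq_smul⟩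

theorem re_star_dotProduct_map_mulVec {𝕜 : Type*} [RCLike 𝕜] (P : Matrix n n ℝ) (v : n → 𝕜) :
    RCLike.re (star v ⬝ᵥ P.map (algebraMap ℝ 𝕜) *ᵥ v) =
      (fun i ↦ RCLike.re (v i)) ⬝ᵥ P *ᵥ (fun i ↦ RCLike.re (v i)) +
        (fun i ↦ RCLike.im (v i)) ⬝ᵥ P *ᵥ (fun i ↦ RCLike.im (v i)) := by
  simp only [dotProduct, mulVec, map_sum, Finset.mul_sum, ← Finset.sum_add_distrib]
  refine Finset.sum_congr rfl fun i _ ↦ Finset.sum_congr rfl fun j _ ↦ ?_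
  simp [RCLike.mul_re, RCLike.mul_im]

theorem PosDef.map_ofReal {𝕜 : Type*} [RCLike 𝕜] {P : Matrix n n ℝ} (hP : P.PosDef) :
    (P.map (algebraMap ℝ 𝕜)).PosDef := by
  have hPc : (P.map (algebraMap ℝ 𝕜)).IsHermitian :=
    hP.isHermitian.map _ fun _ ↦ (RCLike.conj_ofReal _).symm
  refine posDef_iff_dotProduct_mulVec.2 ⟨hPc, fun v hv ↦ RCLike.pos_iff.2
    ⟨?_, hPc.im_star_dotProduct_mulVec_self v⟩⟩
  have hnonneg (x : n → ℝ) : 0 ≤ x ⬝ᵥ P *ᵥ x := by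
    simpa using hP.posSemidef.dotProduct_mulVec_nonneg x
  have hpos {x : n → ℝ} (hx : x ≠ 0) : 0 < x ⬝ᵥ P *ᵥ x := by
    simpa using hP.dotProduct_mulVec_pos hx
  rw [re_star_dotProduct_map_mulVec]
  by_cases hre : (fun i ↦ RCLike.re (v i)) = 0
  · have him : (fun i ↦ RCLike.im (v i)) ≠ 0 := fun him ↦ hv <| funext fun i ↦
      RCLike.ext (by simpa using congrFun hre i) (by simpa using congrFun him i)
    linarith [hnonneg (fun i ↦ RCLike.re (v i)), hpos him]
  · linarith [hnonneg (fun i ↦ RCLike.im (v i)), hpos hre]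

variable [DecidableEq n]

theorem re_lt_zero_of_mem_spectrum_of_lyapunov {𝕜 : Type*} [RCLike 𝕜] {M P : Matrix n n 𝕜}
    (hP : P.PosDef) (hQ : (-(Mᴴ * P + P * M)).PosDef) {μ : 𝕜} (hμ : μ ∈ spectrum 𝕜 M) :
    RCLike.re μ < 0 := by
  obtain ⟨v, hv, hMv⟩ := exists_mulVec_eq_smul_of_mem_spectrum hμ
  have hPv := RCLike.pos_iff.1 (hP.dotProduct_mulVec_pos hv)
  have hQv := (RCLike.pos_iff.1 (hQ.dotProduct_mulVec_pos hv)).1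
  set s := star v ⬝ᵥ P *ᵥ v
  have hform : star v ⬝ᵥ (Mᴴ * P + P * M) *ᵥ v = (star μ + μ) * s := by
    rw [add_mulVec, dotProduct_add, ← mulVec_mulVec, ← mulVec_mulVec, hMv, dotProduct_mulVec,
      ← star_mulVec, hMv, star_smul, smul_dotProduct, mulVec_smul, dotProduct_smul,
      smul_eq_mul, smul_eq_mul, add_mul]
  rw [neg_mulVec, dotProduct_neg, hform, map_neg, RCLike.mul_re, hPv.2, map_add,
    RCLike.star_def, RCLike.conj_re] at hQv
  nlinarith [hPv.1]

theorem re_lt_zero_of_mem_spectrum_map_of_lyapunov {M P : Matrix n n ℝ} (hP : P.PosDef)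
    (hQ : (-(Mᵀ * P + P * M)).PosDef) {μ : ℂ} (hμ : μ ∈ spectrum ℂ (M.map (algebraMap ℝ ℂ))) :
    μ.re < 0 := by
  have hMc : (M.map (algebraMap ℝ ℂ))ᴴ = Mᵀ.map (algebraMap ℝ ℂ) := by ext; simp
  have hQc := hQ.map_ofReal (𝕜 := ℂ)
  rw [← RingHom.mapMatrix_apply, map_neg, map_add, map_mul, map_mul] at hQc
  exact re_lt_zero_of_mem_spectrum_of_lyapunov hP.map_ofReal (hMc ▸ hQc) hμ

end Matrix

theorem hurwitz_of_symmetric_negdef {n m : ℕ}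
    (A : Matrix (Fin n) (Fin n) ℝ) (B : Matrix (Fin n) (Fin m) ℝ)
    (hA : (-A).PosDef) (hAsym : Aᵀ = A) :
    ∀ μ ∈ spectrum ℂ ((A + B * Bᵀ * A⁻¹).map (algebraMap ℝ ℂ)), μ.re < 0 := by
  intro μ hμ
  have hdet : IsUnit A.det := (isUnit_iff_isUnit_det A).1 (by simpa using hA.isUnit)
  have hP : (-A⁻¹).PosDef := by
    have hneg_inv : (-A)⁻¹ = -A⁻¹ := inv_eq_right_inv (by rw [neg_mul_neg, mul_nonsing_inv A hdet])
    exact hneg_inv ▸ hA.inv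
  have hAinv : (A⁻¹)ᵀ = A⁻¹ := by rw [transpose_nonsing_inv, hAsym]
  set C := A⁻¹ * B
  have hlyap : -((A + B * Bᵀ * A⁻¹)ᵀ * (-A⁻¹) + (-A⁻¹) * (A + B * Bᵀ * A⁻¹)) =
      (2 : ℝ) • (1 + C * Cᴴ) := by
    simp only [C, conjTranspose_eq_transpose_of_trivial, transpose_add, transpose_mul,
      transpose_transpose, hAinv, hAsym, add_mul, mul_add, mul_neg, neg_mul, Matrix.mul_assoc,
      mul_nonsing_inv _ hdet, nonsing_inv_mul _ hdet, two_smul]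
    abel
  have hQ : ((2 : ℝ) • (1 + C * Cᴴ)).PosDef :=
    (PosDef.one.add_posSemidef (posSemidef_self_mul_conjTranspose C)).smul two_pos
  exact re_lt_zero_of_mem_spectrum_map_of_lyapunov hP (hlyap ▸ hQ) hμ
end

section
/- Let a > 0 and let g > 0 satisfy the three inequalities 2a² + 1 - g^{-1} ≥ 0, 1 - g^{-1} ≥ 0, and (1 - g^{-1})(2a² + 1 - g^{-1}) - a² ≥ 0. Then for every ω ∈ ℝ, the Hermitian 2×2 matrix [[ω²·a²/(a²+1) + 2a² + 1 - g^{-1}, -a(1 - iω)], [-a(1 + iω), ω² + 1 - g^{-1}]] is positive semidefinite. -/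
/-!
A Hermitian matrix `!![p, q; q̄, r]` with `p, r ≥ 0` and `|q|² ≤ p r` is positive semidefinite,
since its quadratic form is `p |x₀|² + r |x₁|² + 2 Re (x̄₀ q x₁)` and AM-GM gives
`2 |q| |x₀| |x₁| ≤ 2 √(p r) |x₀| |x₁| ≤ p |x₀|² + r |x₁|²`. For the matrix of the theorem,
`|q|² = a² (1 + ω²)`, and with `c = 1 - g⁻¹` and `t = ω² a² / (a² + 1)` the determinant is
`p r - |q|² = t (ω² + c) + (a² + c) ω² + ((2 a² + 1 - g⁻¹) c - a²) ≥ 0`.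
-/

open Matrix
open scoped ComplexOrder

theorem two_mul_mul_mul_le_of_sq_le_mul {p r s : ℝ} (hp : 0 ≤ p) (hr : 0 ≤ r) (hs : s ^ 2 ≤ p * r)
    (u v : ℝ) : 2 * (s * u * v) ≤ p * u ^ 2 + r * v ^ 2 := by
  refine (le_abs_self _).trans (abs_le_of_sq_le_sq ?_ (by positivity))
  nlinarith [sq_nonneg (p * u ^ 2 - r * v ^ 2), mul_nonneg (sub_nonneg.2 hs) (sq_nonneg (u * v))]

section

variable {𝕜 : Type*} [RCLike 𝕜]

theorem re_star_dotProduct_mulVec_fin_two (p r : ℝ) (q : 𝕜) (x : Fin 2 → 𝕜) :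
    RCLike.re (star x ⬝ᵥ (!![(p : 𝕜), q; star q, (r : 𝕜)] *ᵥ x)) =
      p * ‖x 0‖ ^ 2 + r * ‖x 1‖ ^ 2 + 2 * RCLike.re (star (x 0) * q * x 1) := by
  simp [dotProduct, mulVec, Fin.sum_univ_two, RCLike.norm_sq_eq_def]
  ring

theorem posSemidef_fin_two_of_norm_sq_le {p r : ℝ} {q : 𝕜} (hp : 0 ≤ p) (hr : 0 ≤ r)
    (hq : ‖q‖ ^ 2 ≤ p * r) : (!![(p : 𝕜), q; star q, (r : 𝕜)]).PosSemidef := by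
  have hherm : (!![(p : 𝕜), q; star q, (r : 𝕜)]).IsHermitian := by
    ext i j
    fin_cases i <;> fin_cases j <;> simp
  refine .of_dotProduct_mulVec_nonneg hherm fun x ↦
    RCLike.nonneg_iff.2 ⟨?_, hherm.im_star_dotProduct_mulVec_self x⟩
  have hcross : -(‖q‖ * ‖x 0‖ * ‖x 1‖) ≤ RCLike.re (star (x 0) * q * x 1) := by
    refine le_trans ?_ (neg_abs_le _)
    rw [neg_le_neg_iff]
    refine (RCLike.abs_re_le_norm _).trans_eq ?_
    simp only [norm_mul, norm_star]
    ring
  rw [re_star_dotProduct_mulVec_fin_two]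
  linarith [two_mul_mul_mul_le_of_sq_le_mul hp hr hq ‖x 0‖ ‖x 1‖]

end

theorem example3_psd_general (a g : ℝ)
    (h2 : 0 ≤ 1 - g⁻¹)
    (h3 : 0 ≤ (1 - g⁻¹) * (2 * a ^ 2 + 1 - g⁻¹) - a ^ 2) :
    ∀ ω : ℝ,
      (!![((ω ^ 2 * a ^ 2 / (a ^ 2 + 1) + 2 * a ^ 2 + 1 - g⁻¹ : ℝ) : ℂ),
            -a * (1 - Complex.I * ω);
          -a * (1 + Complex.I * ω),
            ((ω ^ 2 + 1 - g⁻¹ : ℝ) : ℂ)] : Matrix (Fin 2) (Fin 2) ℂ).PosSemidef := by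
  intro ω
  set q : ℂ := -a * (1 - Complex.I * ω)
  have hq_star : star q = -a * (1 + Complex.I * ω) := by simp [q]
  have hq_norm : ‖q‖ ^ 2 = a ^ 2 * (1 + ω ^ 2) := by
    rw [← Complex.normSq_eq_norm_sq]
    simp [q, Complex.normSq_apply]
    ring
  have ht : 0 ≤ ω ^ 2 * a ^ 2 / (a ^ 2 + 1) := by positivity
  have hp : 0 ≤ ω ^ 2 * a ^ 2 / (a ^ 2 + 1) + 2 * a ^ 2 + 1 - g⁻¹ := by nlinarith
  have hr : 0 ≤ ω ^ 2 + 1 - g⁻¹ := by nlinarith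
  have hdet : ‖q‖ ^ 2 ≤
      (ω ^ 2 * a ^ 2 / (a ^ 2 + 1) + 2 * a ^ 2 + 1 - g⁻¹) * (ω ^ 2 + 1 - g⁻¹) := by
    rw [hq_norm]
    nlinarith [mul_nonneg ht hr, mul_nonneg h2 (sq_nonneg ω)]
  rw [← hq_star]
  exact posSemidef_fin_two_of_norm_sq_le hp hr hdet

theorem example3_psd (a g : ℝ) (ha : 0 < a) (hg : 0 < g)
    (h1 : 0 ≤ 2 * a ^ 2 + 1 - g⁻¹) (h2 : 0 ≤ 1 - g⁻¹)
    (h3 : 0 ≤ (1 - g⁻¹) * (2 * a ^ 2 + 1 - g⁻¹) - a ^ 2) :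
    ∀ ω : ℝ,
      (!![((ω ^ 2 * a ^ 2 / (a ^ 2 + 1) + 2 * a ^ 2 + 1 - g⁻¹ : ℝ) : ℂ),
            -a * (1 - Complex.I * ω);
          -a * (1 + Complex.I * ω),
            ((ω ^ 2 + 1 - g⁻¹ : ℝ) : ℂ)] : Matrix (Fin 2) (Fin 2) ℂ).PosSemidef :=
  example3_psd_general a g h2 h3
end

section
/- Let M ∈ ℂ^{k×k} be invertible, N ∈ ℂ^{k×m}, and set K = -N* M^{-*} and S = M M* + N N*. Then (M - N K)^{-1} = M* S^{-1}, and consequently the stacked matrix [I; K](M - NK)^{-1} equals [M*; -N*] S^{-1} and has spectral norm ‖S^{-1}‖^{1/2}. -/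
/-!
With `K = -N* M^{-*}` one has `M - N K = (M M* + N N*) M^{-*} = S M^{-*}`, so
`(M - N K)⁻¹ = M* S⁻¹` and `[I; K] (M - N K)⁻¹ = Y S⁻¹` with `Y = [M*; -N*]`. Since
`Y* Y = S`, the C*-identity `‖X‖² = ‖X* X‖` applied to `X = Y S⁻¹` gives
`‖X‖² = ‖S⁻¹ S S⁻¹‖ = ‖S⁻¹‖`. Invertibility of `S` comes from `M M*` being positive definite.
-/

open Matrix
open scoped ComplexOrder

/-- The spectral norm (ℓ²-operator norm) of a matrix. -/
noncomputable def specNorm {𝕜 m n : Type*} [RCLike 𝕜] [Fintype m] [Fintype n] [DecidableEq n]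
    (X : Matrix m n 𝕜) : ℝ := ‖(Matrix.toEuclideanLin X).toContinuousLinearMap‖

open scoped Matrix.Norms.L2Operator in
theorem specNorm_eq_sqrt_specNorm_conjTranspose_mul_self {𝕜 m n : Type*} [RCLike 𝕜]
    [Fintype m] [Fintype n] [DecidableEq n] (X : Matrix m n 𝕜) :
    specNorm X = √(specNorm (Xᴴ * X)) := by
  change ‖X‖ = √‖Xᴴ * X‖
  rw [l2_opNorm_conjTranspose_mul_self, Real.sqrt_mul_self (norm_nonneg X)]

namespace Matrix

theorem fromRows_one_mul {R m n p : Type*} [Semiring R] [Fintype n] [DecidableEq n]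
    (K : Matrix m n R) (X : Matrix n p R) : fromRows 1 K * X = fromRows X (K * X) := by
  rw [fromRows_mul, Matrix.one_mul]

section CommRing

variable {R n p : Type*} [CommRing R] [StarRing R] [Fintype n] [DecidableEq n] [Fintype p]

theorem sub_mul_neg_conjTranspose_mul_inv {M : Matrix n n R} (hM : IsUnit M)
    (N : Matrix n p R) : M - N * -(Nᴴ * Mᴴ⁻¹) = (M * Mᴴ + N * Nᴴ) * Mᴴ⁻¹ := by
  have hMH : IsUnit Mᴴ.det := (isUnit_iff_isUnit_det _).mp ((isUnit_conjTranspose M).mpr hM)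
  rw [Matrix.mul_neg, sub_neg_eq_add, Matrix.add_mul, mul_nonsing_inv_cancel_right _ M hMH,
    Matrix.mul_assoc]

theorem inv_sub_mul_neg_conjTranspose_mul_inv {M : Matrix n n R} (hM : IsUnit M)
    (N : Matrix n p R) : (M - N * -(Nᴴ * Mᴴ⁻¹))⁻¹ = Mᴴ * (M * Mᴴ + N * Nᴴ)⁻¹ := by
  have hMH : IsUnit Mᴴ.det := (isUnit_iff_isUnit_det _).mp ((isUnit_conjTranspose M).mpr hM)
  rw [sub_mul_neg_conjTranspose_mul_inv hM, Matrix.mul_inv_rev, nonsing_inv_nonsing_inv _ hMH]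

omit [Fintype p] in
theorem conjTranspose_mul_self_of_mul_inv {m : Type*} [Fintype m] (Y : Matrix m n R)
    (hY : IsUnit (Yᴴ * Y)) : (Y * (Yᴴ * Y)⁻¹)ᴴ * (Y * (Yᴴ * Y)⁻¹) = (Yᴴ * Y)⁻¹ := by
  rw [conjTranspose_mul, conjTranspose_nonsing_inv, conjTranspose_mul, conjTranspose_conjTranspose,
    Matrix.mul_assoc, ← Matrix.mul_assoc Yᴴ, mul_nonsing_inv _ ((isUnit_iff_isUnit_det _).mp hY),
    Matrix.mul_one]

end CommRing

theorem posDef_mul_conjTranspose_add_mul_conjTranspose {𝕜 n p : Type*} [RCLike 𝕜] [Fintype n]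
    [DecidableEq n] [Fintype p] {M : Matrix n n 𝕜} (hM : IsUnit M) (N : Matrix n p 𝕜) :
    (M * Mᴴ + N * Nᴴ).PosDef :=
  (PosDef.mul_conjTranspose_self M (vecMul_injective_of_isUnit hM)).add_posSemidef
    (posSemidef_self_mul_conjTranspose N)

end Matrix

theorem closed_loop_achieves_bound {k m : ℕ}
    (M : Matrix (Fin k) (Fin k) ℂ) (N : Matrix (Fin k) (Fin m) ℂ) (hM : IsUnit M) :
    let K : Matrix (Fin m) (Fin k) ℂ := -(Nᴴ * (Mᴴ)⁻¹)
    let S : Matrix (Fin k) (Fin k) ℂ := M * Mᴴ + N * Nᴴ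
    (M - N * K)⁻¹ = Mᴴ * S⁻¹ ∧
      fromRows (1 : Matrix (Fin k) (Fin k) ℂ) K * (M - N * K)⁻¹
        = fromRows Mᴴ (-Nᴴ) * S⁻¹ ∧
      specNorm (fromRows (1 : Matrix (Fin k) (Fin k) ℂ) K * (M - N * K)⁻¹)
        = Real.sqrt (specNorm S⁻¹) := by
  intro K S
  set Y := fromRows Mᴴ (-Nᴴ)
  have hYY : Yᴴ * Y = S := by
    rw [conjTranspose_fromRows_eq_fromCols_conjTranspose, fromCols_mul_fromRows,
      conjTranspose_conjTranspose, conjTranspose_neg, conjTranspose_conjTranspose, Matrix.neg_mul,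
      Matrix.mul_neg, neg_neg]
  have hS : IsUnit S := (posDef_mul_conjTranspose_add_mul_conjTranspose hM N).isUnit
  have hinv : (M - N * K)⁻¹ = Mᴴ * S⁻¹ := inv_sub_mul_neg_conjTranspose_mul_inv hM N
  have hMH : IsUnit Mᴴ.det := (isUnit_iff_isUnit_det _).mp ((isUnit_conjTranspose M).mpr hM)
  have hstack : fromRows 1 K * (M - N * K)⁻¹ = Y * S⁻¹ := by
    rw [hinv, fromRows_one_mul, Matrix.neg_mul, Matrix.mul_assoc,
      nonsing_inv_mul_cancel_left _ _ hMH, ← Matrix.neg_mul, ← fromRows_mul]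
  refine ⟨hinv, hstack, ?_⟩
  rw [hstack, specNorm_eq_sqrt_specNorm_conjTranspose_mul_self, ← hYY,
    conjTranspose_mul_self_of_mul_inv Y (hYY ▸ hS)]
end

section
/- Let A ∈ ℝ^{n×n} be symmetric negative definite and B ∈ ℝ^{n×m}, and set G = A² + B Bᵀ and F = A (i.e., E = I). Then for all ω ∈ ℝ, the real symmetric matrix ω² A G^{-1} A + G - ‖G^{-1}‖^{-1} I is positive semidefinite. -/
open Matrix

/-! Since `A` is invertible, `G = A² + B Bᵀ` is positive definite, so `ω² • A G⁻¹ A = ω² • Aᵀ G⁻¹ A`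
is positive semidefinite and it remains to show `G ⪰ ‖G⁻¹‖⁻¹ • 1`. Cauchy–Schwarz for the form
`(x, y) ↦ x ⬝ᵥ G *ᵥ y`, applied to `x` and `G⁻¹ *ᵥ x`, gives
`(x ⬝ᵥ x)² ≤ (x ⬝ᵥ G *ᵥ x) (x ⬝ᵥ G⁻¹ *ᵥ x) ≤ (x ⬝ᵥ G *ᵥ x) ‖G⁻¹‖ (x ⬝ᵥ x)`. -/

lemma specNorm_nonneg {𝕜 m n : Type*} [RCLike 𝕜] [Fintype m] [Fintype n] [DecidableEq n]
    (X : Matrix m n 𝕜) : 0 ≤ specNorm X :=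
  norm_nonneg _

namespace Matrix
variable {ι : Type*} [Fintype ι]

lemma PosSemidef.dotProduct_mulVec_sq_le {G : Matrix ι ι ℝ} (hG : G.PosSemidef) (x y : ι → ℝ) :
    (x ⬝ᵥ (G *ᵥ y)) ^ 2 ≤ (x ⬝ᵥ (G *ᵥ x)) * (y ⬝ᵥ (G *ᵥ y)) := by
  let := G.toSeminormedAddCommGroup hG
  let := G.toInnerProductSpace hG
  have inner_eq (u v : ι → ℝ) : (inner ℝ u v : ℝ) = u ⬝ᵥ (G *ᵥ v) := dotProduct_comm _ _
  have h := real_inner_mul_inner_self_le x y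
  rwa [inner_eq, inner_eq, inner_eq, ← sq] at h

variable [DecidableEq ι]

lemma dotProduct_mulVec_le_specNorm_mul (M : Matrix ι ι ℝ) (x : ι → ℝ) :
    x ⬝ᵥ (M *ᵥ x) ≤ specNorm M * (x ⬝ᵥ x) := by
  set v : EuclideanSpace ℝ ι := WithLp.toLp 2 x
  have inner_eq (y : ι → ℝ) : x ⬝ᵥ y = inner ℝ v (WithLp.toLp 2 y) := by
    rw [EuclideanSpace.inner_toLp_toLp, star_trivial, dotProduct_comm]
  calc x ⬝ᵥ (M *ᵥ x) = inner ℝ v ((toEuclideanLin M).toContinuousLinearMap v) := inner_eq _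
    _ ≤ ‖v‖ * ‖(toEuclideanLin M).toContinuousLinearMap v‖ := real_inner_le_norm _ _
    _ ≤ ‖v‖ * (specNorm M * ‖v‖) := by gcongr; exact ContinuousLinearMap.le_opNorm _ _
    _ = specNorm M * (x ⬝ᵥ x) := by rw [inner_eq, real_inner_self_eq_norm_mul_norm]; ring

lemma PosDef.dotProduct_self_le_specNorm_inv_mul {G : Matrix ι ι ℝ} (hG : G.PosDef) (x : ι → ℝ) :
    x ⬝ᵥ x ≤ specNorm G⁻¹ * (x ⬝ᵥ (G *ᵥ x)) := by
  have hq : 0 ≤ x ⬝ᵥ (G *ᵥ x) := by simpa using hG.posSemidef.dotProduct_mulVec_nonneg x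
  have hcs := hG.posSemidef.dotProduct_mulVec_sq_le x (G⁻¹ *ᵥ x)
  rw [mulVec_mulVec, mul_nonsing_inv _ ((isUnit_iff_isUnit_det G).mp hG.isUnit), one_mulVec,
    dotProduct_comm (G⁻¹ *ᵥ x)] at hcs
  have hmul : x ⬝ᵥ x * (x ⬝ᵥ x) ≤ x ⬝ᵥ x * (specNorm G⁻¹ * (x ⬝ᵥ (G *ᵥ x))) :=
    calc x ⬝ᵥ x * (x ⬝ᵥ x) ≤ x ⬝ᵥ (G *ᵥ x) * (x ⬝ᵥ (G⁻¹ *ᵥ x)) := by rwa [← sq]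
      _ ≤ x ⬝ᵥ (G *ᵥ x) * (specNorm G⁻¹ * (x ⬝ᵥ x)) :=
        mul_le_mul_of_nonneg_left (dotProduct_mulVec_le_specNorm_mul G⁻¹ x) hq
      _ = x ⬝ᵥ x * (specNorm G⁻¹ * (x ⬝ᵥ (G *ᵥ x))) := by ring
  rcases (dotProduct_self_star_nonneg x).eq_or_lt with hx | hx
  · rw [star_trivial] at hx
    rw [← hx]
    exact mul_nonneg (specNorm_nonneg _) hq
  · exact le_of_mul_le_mul_left hmul (by simpa using hx)

lemma PosDef.posSemidef_sub_specNorm_inv_inv_smul_one {G : Matrix ι ι ℝ} (hG : G.PosDef) :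
    (G - (specNorm G⁻¹)⁻¹ • (1 : Matrix ι ι ℝ)).PosSemidef := by
  refine .of_dotProduct_mulVec_nonneg (hG.isHermitian.sub (isHermitian_one.smul (.all _)))
    fun x => ?_
  rw [star_trivial, sub_mulVec, dotProduct_sub, smul_mulVec, one_mulVec, dotProduct_smul,
    smul_eq_mul, sub_nonneg]
  rcases (specNorm_nonneg G⁻¹).eq_or_lt with hN | hN
  · rw [← hN]
    simpa using hG.posSemidef.dotProduct_mulVec_nonneg x
  · rw [inv_mul_le_iff₀ hN]
    exact hG.dotProduct_self_le_specNorm_inv_mul x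

lemma PosDef.mul_self {K : Type*} [Field K] [PartialOrder K] [StarRing K] [StarOrderedRing K]
    {M : Matrix ι ι K} (hM : M.PosDef) : (M * M).PosDef := by
  have h := PosDef.conjTranspose_mul_self M (mulVec_injective_iff_isUnit.mpr hM.isUnit)
  rwa [hM.isHermitian.eq] at h

end Matrix

theorem corollary2_criterion_general {n m : ℕ}
    (A : Matrix (Fin n) (Fin n) ℝ) (B : Matrix (Fin n) (Fin m) ℝ)
    (hA : (-A).PosDef) :
    let G : Matrix (Fin n) (Fin n) ℝ := A * A + B * Bᵀ
    ∀ ω : ℝ,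
      ((ω ^ 2) • (A * G⁻¹ * A) + G - (specNorm G⁻¹)⁻¹ • (1 : Matrix (Fin n) (Fin n) ℝ)).PosSemidef := by
  intro G ω
  have hAsymm : Aᴴ = A := by simpa using hA.isHermitian.eq
  have hG : G.PosDef := by
    simpa using hA.mul_self.add_posSemidef (posSemidef_self_mul_conjTranspose B)
  have hAGA : (A * G⁻¹ * A).PosSemidef := by
    have h := hG.inv.posSemidef.conjTranspose_mul_mul_same A
    rwa [hAsymm] at h
  rw [add_sub_assoc]
  exact (hAGA.smul (sq_nonneg ω)).add hG.posSemidef_sub_specNorm_inv_inv_smul_one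

theorem corollary2_criterion {n m : ℕ}
    (A : Matrix (Fin n) (Fin n) ℝ) (B : Matrix (Fin n) (Fin m) ℝ)
    (hA : (-A).PosDef) (hAsym : Aᵀ = A) :
    let G : Matrix (Fin n) (Fin n) ℝ := A * A + B * Bᵀ
    ∀ ω : ℝ,
      ((ω ^ 2) • (A * G⁻¹ * A) + G - (specNorm G⁻¹)⁻¹ • (1 : Matrix (Fin n) (Fin n) ℝ)).PosSemidef :=
  corollary2_criterion_general A B hA
end
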